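/- Let n ≥ 1 and let ν be a probability vector on {0,1}^n satisfying ν(ρ) = ν(−ρ) for all ρ and ν(00…0) + ν(11…1) ≥ 1/2. Then ν is a divide and color model with parameter 1/2: there exists a probability vector q on B_n (nonnegative entries summing to 1) with A_{n,1/2} q = ν. -/

import Mathlib

open Finset

/-- The divide-and-color matrix `A_{n,p}`: entry at configuration `ρ` and partition `σ` is
`p^{c(σ,ρ)}(1-p)^{‖σ‖-c(σ,ρ)}` if `ρ` is constant on every block of `σ`, and `0` otherwise. -/
noncomputable def colorMatrix (n : ℕ) (p : ℝ) :
    Matrix (Fin n → Bool) (Finpartition (univ : Finset (Fin n))) ℝ :=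
  fun ρ σ =>
    if ∀ B ∈ σ.parts, ∀ i ∈ B, ∀ j ∈ B, ρ i = ρ j then
      p ^ (σ.parts.filter (fun B => ∀ i ∈ B, ρ i = true)).card *
        (1 - p) ^ (σ.parts.card - (σ.parts.filter (fun B => ∀ i ∈ B, ρ i = true)).card)
    else 0

/-- The induced linear map `A_{n,p} : ℝ^{B_n} → ℝ^{{0,1}^n}`. -/
noncomputable def colorMap (n : ℕ) (p : ℝ) :
    ((Finpartition (univ : Finset (Fin n))) → ℝ) →ₗ[ℝ] ((Fin n → Bool) → ℝ) :=
  (colorMatrix n p).mulVecLin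

/-!
Draw a configuration `ρ'` with probability `w ρ'` and split `[n]` into the level sets of `ρ'`,
where `w ρ' = 2 ν ρ'` for nonconstant `ρ'` and `w ρ' = 2 ν(0…0) - 1/2` for the two constant ones;
the latter is nonnegative precisely because `ν(0…0) + ν(1…1) ≥ 1/2`. When the blocks are then
colored by fair coins, a nonconstant `ρ` can only come from the two-block partition
`{ρ⁻¹(1), ρ⁻¹(0)}`, which is drawn from `ρ' = ρ` and `ρ' = -ρ` and is colored as `ρ` with
probability `1/4`; this gives `(2 ν ρ + 2 ν (-ρ)) / 4 = ν ρ`. The remaining mass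
`ν(0…0) + ν(1…1)` goes to the two constant configurations, evenly since the coins are fair, and
`ν(0…0) = ν(1…1)` by symmetry.
-/

section LevelPartition

variable {α β γ : Type*} [Fintype α] [DecidableEq α] [DecidableEq β]

def levelPartition (f : α → β) : Finpartition (univ : Finset α) :=
  Finpartition.ofSetoid (Setoid.ker f)

theorem levelPartition_parts (f : α → β) :
    (levelPartition f).parts = univ.image fun a => ({b | f a = f b} : Finset α) := rfl

theorem forall_mem_levelPartition_parts_iff (f : α → β) (g : α → γ) :
    (∀ B ∈ (levelPartition f).parts, ∀ i ∈ B, ∀ j ∈ B, g i = g j) ↔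
      ∀ i j, f i = f j → g i = g j := by
  simp only [levelPartition_parts, mem_image, mem_univ, true_and, forall_exists_index,
    forall_apply_eq_imp_iff, mem_filter]
  refine ⟨fun h i j hij => h i i rfl j hij, fun h a i hi j hj => ?_⟩
  exact (h a i hi).symm.trans (h a j hj)

theorem card_levelPartition_parts (f : α → β) :
    #(levelPartition f).parts = #(univ.image f) := by
  set fibre : β → Finset α := fun c => {b | c = f b}
  rw [levelPartition_parts, ← Function.comp_def fibre f, ← image_image]
  refine card_image_of_injOn fun c hc c' _ h => ?_
  obtain ⟨a, -, rfl⟩ := mem_image.mp hc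
  have : a ∈ fibre c' := by simp [fibre, ← h]
  simpa [fibre, eq_comm] using this

theorem levelPartition_comp_of_injective {g : β → γ} [DecidableEq γ] (hg : g.Injective)
    (f : α → β) : levelPartition (fun a => g (f a)) = levelPartition f := by
  ext : 1
  simp [levelPartition_parts, hg.eq_iff]

end LevelPartition

section BoolValued

variable {α : Type*} {ρ ρ' : α → Bool}

theorem eq_or_eq_not_of_forall_eq_imp (hρ : Function.Surjective ρ)
    (h : ∀ i j, ρ' i = ρ' j → ρ i = ρ j) : ρ' = ρ ∨ ρ' = fun i => !ρ i := by
  obtain ⟨a, ha⟩ := hρ true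
  obtain ⟨b, hb⟩ := hρ false
  have hab : ρ' a ≠ ρ' b := fun hab => by simpa [ha, hb] using h a b hab
  have hia := fun i => h i a
  have hib := fun i => h i b
  cases hρ'a : ρ' a
  · right; funext i
    cases hi : ρ' i <;> cases ρ' b <;> simp_all
  · left; funext i
    cases hi : ρ' i <;> cases ρ' b <;> simp_all

variable [Fintype α]

theorem notMem_image_const_iff_surjective [Nonempty α] :
    ρ ∉ univ.image (Function.const α) ↔ Function.Surjective ρ := by
  refine ⟨fun hρ b => ?_, ?_⟩
  · by_contra! h
    exact hρ (mem_image.mpr ⟨!b, mem_univ _, funext fun i => by cases b <;> simpa using h i⟩)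
  · intro hρ hmem
    obtain ⟨b, -, rfl⟩ := mem_image.mp hmem
    obtain ⟨i, hi⟩ := hρ (!b)
    cases b <;> simp at hi

theorem card_image_univ_of_surjective (hρ : Function.Surjective ρ) : #(univ.image ρ) = 2 := by
  rw [image_univ_of_surjective hρ, card_univ, Fintype.card_bool]

theorem card_image_univ_const [Nonempty α] (b : Bool) :
    #(univ.image (Function.const α b)) = 1 := by
  rw [show Function.const α b = fun _ => b from rfl, image_const univ_nonempty, card_singleton]

theorem sum_image_const {M : Type*} [Nonempty α] [AddCommMonoid M] (f : (α → Bool) → M) :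
    ∑ ρ ∈ univ.image (Function.const α), f ρ =
      f (Function.const α true) + f (Function.const α false) := by
  rw [sum_image fun _ _ _ _ h => Function.const_injective h, Fintype.sum_bool]

end BoolValued

section ColorMatrix

variable {n : ℕ}

theorem colorMatrix_half_apply (ρ : Fin n → Bool) (σ : Finpartition (univ : Finset (Fin n))) :
    colorMatrix n (1/2) ρ σ =
      if ∀ B ∈ σ.parts, ∀ i ∈ B, ∀ j ∈ B, ρ i = ρ j then (1/2 : ℝ) ^ #σ.parts else 0 := by
  unfold colorMatrix
  split_ifs
  · rw [show (1 : ℝ) - 1/2 = 1/2 by norm_num, ← pow_add, Nat.add_sub_cancel' (card_filter_le _ _)]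
  · rfl

theorem colorMatrix_half_levelPartition (ρ ρ' : Fin n → Bool) :
    colorMatrix n (1/2) ρ (levelPartition ρ') =
      if ∀ i j, ρ' i = ρ' j → ρ i = ρ j then (1/2 : ℝ) ^ #(univ.image ρ') else 0 := by
  simp only [colorMatrix_half_apply, forall_mem_levelPartition_parts_iff, card_levelPartition_parts]

theorem colorMatrix_half_levelPartition_of_const (b : Bool) (ρ' : Fin n → Bool) :
    colorMatrix n (1/2) (Function.const _ b) (levelPartition ρ') =
      (1/2 : ℝ) ^ #(univ.image ρ') := by
  rw [colorMatrix_half_levelPartition]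
  exact if_pos fun _ _ _ => rfl

theorem colorMatrix_half_levelPartition_self {ρ : Fin n → Bool} (hρ : Function.Surjective ρ) :
    colorMatrix n (1/2) ρ (levelPartition ρ) = 1/4 := by
  rw [colorMatrix_half_levelPartition, if_pos fun _ _ => id, card_image_univ_of_surjective hρ]
  norm_num

theorem colorMatrix_half_levelPartition_eq_zero {ρ ρ' : Fin n → Bool} (hρ : Function.Surjective ρ)
    (h : ρ' ≠ ρ ∧ ρ' ≠ fun i => !ρ i) : colorMatrix n (1/2) ρ (levelPartition ρ') = 0 := by
  rw [colorMatrix_half_levelPartition, if_neg]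
  exact fun h' => (eq_or_eq_not_of_forall_eq_imp hρ h').elim h.1 h.2

end ColorMatrix

section Weight

variable {n : ℕ} (ν : (Fin n → Bool) → ℝ)

noncomputable def dcWeight (ρ : Fin n → Bool) : ℝ :=
  2 * ν ρ - if ρ ∈ univ.image (Function.const _) then 1/2 else 0

variable {ν}

theorem apply_const_eq_of_symm (hsym : ∀ ρ : Fin n → Bool, ν ρ = ν (fun i => !(ρ i))) (b : Bool) :
    ν (Function.const _ b) = (ν (fun _ => false) + ν (fun _ => true)) / 2 := by
  have h : ν (Function.const _ false) = ν (Function.const _ true) := hsym _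
  change ν (Function.const _ b) = (ν (Function.const _ false) + ν (Function.const _ true)) / 2
  cases b <;> linarith

theorem dcWeight_nonneg (hnonneg : ∀ ρ, 0 ≤ ν ρ)
    (hsym : ∀ ρ : Fin n → Bool, ν ρ = ν (fun i => !(ρ i)))
    (hconst : (1:ℝ)/2 ≤ ν (fun _ => false) + ν (fun _ => true)) (ρ : Fin n → Bool) :
    0 ≤ dcWeight ν ρ := by
  unfold dcWeight
  split_ifs with hρ
  · obtain ⟨b, -, rfl⟩ := mem_image.mp hρ
    linarith [apply_const_eq_of_symm hsym b]
  · linarith [hnonneg ρ]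

theorem sum_dcWeight [NeZero n] (hsum : ∑ ρ, ν ρ = 1) : ∑ ρ, dcWeight ν ρ = 1 := by
  unfold dcWeight
  rw [sum_sub_distrib, ← mul_sum, hsum, sum_ite_mem, univ_inter, sum_image_const]
  norm_num

theorem sum_colorMatrix_half_mul_dcWeight_of_surjective [NeZero n]
    (hsym : ∀ ρ : Fin n → Bool, ν ρ = ν (fun i => !(ρ i))) {ρ : Fin n → Bool}
    (hρ : Function.Surjective ρ) :
    ∑ ρ', colorMatrix n (1/2) ρ (levelPartition ρ') * dcWeight ν ρ' = ν ρ := by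
  have hρ' : Function.Surjective fun i => !ρ i := Bool.involutive_not.surjective.comp hρ
  have hne : ρ ≠ fun i => !ρ i := fun h => by simpa using congrFun h 0
  rw [Fintype.sum_eq_add ρ _ hne fun ρ' h' => by
      rw [colorMatrix_half_levelPartition_eq_zero hρ h', zero_mul],
    levelPartition_comp_of_injective Bool.not_injective, colorMatrix_half_levelPartition_self hρ,
    dcWeight, dcWeight,
    if_neg (notMem_image_const_iff_surjective.mpr hρ),
    if_neg (notMem_image_const_iff_surjective.mpr hρ'), ← hsym]
  ring

theorem sum_colorMatrix_half_mul_dcWeight_const [NeZero n] (hsum : ∑ ρ, ν ρ = 1)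
    (hsym : ∀ ρ : Fin n → Bool, ν ρ = ν (fun i => !(ρ i))) (b : Bool) :
    ∑ ρ', colorMatrix n (1/2) (Function.const _ b) (levelPartition ρ') * dcWeight ν ρ' =
      ν (Function.const _ b) := by
  set C := univ.image (Function.const (Fin n) : Bool → Fin n → Bool)
  have hC : ∀ ρ' ∈ C,
      colorMatrix n (1/2) (Function.const _ b) (levelPartition ρ') * dcWeight ν ρ' = ν ρ' - 1/4 := by
    intro ρ' hρ'
    obtain ⟨c, -, rfl⟩ := mem_image.mp hρ'
    rw [colorMatrix_half_levelPartition_of_const, card_image_univ_const, dcWeight, if_pos hρ']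
    ring
  have hCc : ∀ ρ' ∈ Cᶜ,
      colorMatrix n (1/2) (Function.const _ b) (levelPartition ρ') * dcWeight ν ρ' = ν ρ' / 2 := by
    intro ρ' hρ'
    rw [mem_compl] at hρ'
    rw [colorMatrix_half_levelPartition_of_const,
      card_image_univ_of_surjective (notMem_image_const_iff_surjective.mp hρ'), dcWeight,
      if_neg hρ']
    ring
  have hνC : ∑ ρ' ∈ Cᶜ, ν ρ' = 1 - ∑ ρ' ∈ C, ν ρ' := by
    rw [← hsum, ← sum_add_sum_compl C]; ring
  rw [← sum_add_sum_compl C, sum_congr rfl hC, sum_congr rfl hCc, ← sum_div, hνC,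
    sum_image_const, sum_image_const, apply_const_eq_of_symm hsym, apply_const_eq_of_symm hsym,
    apply_const_eq_of_symm hsym]
  ring

theorem sum_colorMatrix_half_mul_dcWeight [NeZero n] (hsum : ∑ ρ, ν ρ = 1)
    (hsym : ∀ ρ : Fin n → Bool, ν ρ = ν (fun i => !(ρ i))) (ρ : Fin n → Bool) :
    ∑ ρ', colorMatrix n (1/2) ρ (levelPartition ρ') * dcWeight ν ρ' = ν ρ := by
  by_cases hρ : ρ ∈ univ.image (Function.const _)
  · obtain ⟨b, -, rfl⟩ := mem_image.mp hρ
    exact sum_colorMatrix_half_mul_dcWeight_const hsum hsym b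
  · exact sum_colorMatrix_half_mul_dcWeight_of_surjective hsym
      (notMem_image_const_iff_surjective.mp hρ)

end Weight

/-- a `{0,1}`-symmetric probability vector `ν` with
`ν(00…0) + ν(11…1) ≥ 1/2` is a divide and color model with parameter `1/2`. -/
theorem dc_model_half (n : ℕ) (hn : 1 ≤ n) (ν : (Fin n → Bool) → ℝ)
    (hnonneg : ∀ ρ, 0 ≤ ν ρ) (hsum : ∑ ρ, ν ρ = 1)
    (hsym : ∀ ρ : Fin n → Bool, ν ρ = ν (fun i => !(ρ i)))
    (hconst : (1:ℝ)/2 ≤ ν (fun _ => false) + ν (fun _ => true)) :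
    ∃ q : Finpartition (univ : Finset (Fin n)) → ℝ,
      (∀ σ, 0 ≤ q σ) ∧ (∑ σ, q σ = 1) ∧ colorMap n (1/2) q = ν := by
  have : NeZero n := ⟨by omega⟩
  refine ⟨∑ ρ', Pi.single (levelPartition ρ') (dcWeight ν ρ'), fun σ => ?_, ?_, ?_⟩
  · rw [Finset.sum_apply]
    refine sum_nonneg fun ρ' _ => ?_
    rw [Pi.single_apply]
    exact ite_nonneg (dcWeight_nonneg hnonneg hsym hconst ρ') le_rfl
  · simp only [Finset.sum_apply]
    rw [sum_comm]
    simp only [sum_pi_single', mem_univ, if_true]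
    exact sum_dcWeight hsum
  · ext ρ
    simp only [colorMap, Matrix.mulVecLin_apply, Matrix.mulVec_sum, Matrix.mulVec_single,
      Finset.sum_apply, Pi.smul_apply, Matrix.col_apply, op_smul_eq_mul]
    exact sum_colorMatrix_half_mul_dcWeight hsum hsym ρ
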